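/- If the attacked system Sa/Ga is AE-robust recoverable with respect to G_robust, then there exists a resilient supervisor S^R for the attacked closed-loop system G^R with respect to Σ_{c,v} and G_robust, i.e., a supervisor that permits the full nominal behavior L(S/G) in the absence of attacks and enforces a robust-recovery strategy to G_robust after every AE-attack. -/

import Mathlib

/-!
Common formalization of supervisory control of DES under actuator-enablement
attacks, following the natural-language context.

* A plant is a DFA with partial transition function `f : X → E → Option X`
  and initial state `x0`; `runFrom` extends `f` to strings; `Lang f x0` is the
  generated language.
* A strict subautomaton of an automaton is represented by its state set
  `Q : Set X`, with induced transition function `subStep f Q`.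
* Attacked events are modelled by the alphabet `E ⊕ E`: `Sum.inl e` is the
  ordinary event `e`, `Sum.inr e` is the attacked copy `eᵃ` (meaningful for
  `e ∈ Scv`).
* The attacked plant `gaStep`, attacked supervisor `saStep` (state `none`
  playing the role of the fresh state `A`), and their synchronous composition
  `grStep` (the attacked closed-loop system `G^R = Sa ∥ Ga`) are defined below,
  together with detection states, robust-recovery, the resilient specification
  `Ha`, supervisors for `G^R`, and resilience.
-/

open Classical List

namespace RobustRec

variable {X : Type*} {E : Type*}

/-- Extension of a partial transition function to strings. -/
def runFrom (f : X → E → Option X) : X → List E → Option X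
  | x, [] => some x
  | x, e :: w => (f x e).bind fun y => runFrom f y w

/-- Language generated from state `x0`. -/
def Lang (f : X → E → Option X) (x0 : X) : Set (List E) :=
  {w | (runFrom f x0 w).isSome}

/-- Transition function of the strict (induced) subautomaton with state set `Q`:
a transition is defined iff it is defined in the big automaton and both its
endpoints lie in `Q`. -/
noncomputable def subStep (f : X → E → Option X) (Q : Set X) : X → E → Option X :=
  fun x e => (f x e).bind fun y => if x ∈ Q ∧ y ∈ Q then some y else none

/-- Vulnerable states: those where some vulnerable controllable event is feasible. -/
def vulnStates (f : X → E → Option X) (Scv : Set E) : Set X :=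
  {x | ∃ e ∈ Scv, (f x e).isSome}

/-- A supervisor for the plant `(f, x0)`, represented by its state set `XS`
(the induced strict subautomaton): it contains `x0`, is controllable w.r.t.
the uncontrollable events `Suc`, and is safe w.r.t. the unsafe states `XUS`. -/
structure IsSupervisor (f : X → E → Option X) (x0 : X) (Suc : Set E)
    (XUS : Set X) (XS : Set X) : Prop where
  init_mem : x0 ∈ XS
  controllable : ∀ x ∈ XS, ∀ e ∈ Suc, ∀ y, f x e = some y → y ∈ XS
  safe : ∀ x ∈ XS, x ∉ XUS

/-- The attacked plant `Ga`: all transitions of `G`, plus, for every transition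
on a vulnerable event `σ ∈ Scv`, a parallel transition on its attacked copy. -/
noncomputable def gaStep (f : X → E → Option X) (Scv : Set E) :
    X → E ⊕ E → Option X
  | x, Sum.inl e => f x e
  | x, Sum.inr e => if e ∈ Scv then f x e else none

/-- The attacked supervisor `Sa`: states are `some x` for states `x` of `S`
plus the fresh state `A = none` with a self-loop on every event; for every
state `x` of `S` and `σ ∈ Scv` with `f_S(x,σ)` undefined there is a transition
on `σᵃ` from `x` to `A`. -/
noncomputable def saStep (f : X → E → Option X) (XS : Set X) (Scv : Set E) :
    Option X → E ⊕ E → Option (Option X)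
  | none, _ => some none
  | some x, Sum.inl e => (subStep f XS x e).map some
  | some x, Sum.inr e =>
      if e ∈ Scv ∧ x ∈ XS ∧ subStep f XS x e = none then some none else none

/-- Synchronous composition of two automata over a common alphabet. -/
def prodStep {X1 X2 A : Type*} (f1 : X1 → A → Option X1) (f2 : X2 → A → Option X2) :
    X1 × X2 → A → Option (X1 × X2) :=
  fun p a => (f1 p.1 a).bind fun y1 => (f2 p.2 a).map fun y2 => (y1, y2)

/-- The attacked closed-loop system `G^R = Sa ∥ Ga`. Its post-attack states are
those of the form `(none, x)`, i.e. `(A, x)`. -/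
noncomputable def grStep (f : X → E → Option X) (XS : Set X) (Scv : Set E) :
    Option X × X → E ⊕ E → Option (Option X × X) :=
  prodStep (saStep f XS Scv) (gaStep f Scv)

/-- Initial state of `G^R`. -/
def grInit (x0 : X) : Option X × X := (some x0, x0)

/-- Embedding of strings over `Σ` into strings over `Σ ∪ Σᵃ_{c,v}`. -/
def embed : List E → List (E ⊕ E) := List.map Sum.inl

/-- The language `L(Sa/Ga)` of the attacked closed-loop system. -/
noncomputable def GRLang (f : X → E → Option X) (x0 : X) (XS : Set X) (Scv : Set E) :
    Set (List (E ⊕ E)) :=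
  Lang (grStep f XS Scv) (grInit x0)

/-- The detection language `L_det = {sσ ∈ L(G) | s ∈ L(S/G), σ ∈ Σ_{c,v},
sσᵃ ∈ L(Sa/Ga)}`. -/
noncomputable def detLang (f : X → E → Option X) (x0 : X) (XS : Set X) (Scv : Set E) :
    Set (List E) :=
  {w | ∃ s σ, w = s ++ [σ] ∧ σ ∈ Scv ∧ w ∈ Lang f x0 ∧
        s ∈ Lang (subStep f XS) x0 ∧ embed s ++ [Sum.inr σ] ∈ GRLang f x0 XS Scv}

/-- The detection states `X_det = {f(x0, sσ) : sσ ∈ L_det}`. -/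
noncomputable def detStates (f : X → E → Option X) (x0 : X) (XS : Set X) (Scv : Set E) :
    Set X :=
  {x | ∃ w ∈ detLang f x0 XS Scv, runFrom f x0 w = some x}

/-- `r` is a robust-recovery strategy from `x` relative to the candidate set `R`
of recoverable states, the robust region `XR` and the bad states
`Bad = X_v ∪ X_US`: (1) `r` leads into `XR`; (2) no prefix of `r` visits `Bad`;
(3) no prefix of `r` can uncontrollably reach `Bad`; (4) any one-step
uncontrollable deviation from `r` lands in `R`. -/
def IsRecoveryPath (f : X → E → Option X) (Suc : Set E) (XR Bad : Set X)
    (R : Set X) (x : X) (r : List E) : Prop :=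
  (∃ y ∈ XR, runFrom f x r = some y) ∧
  (∀ t, t <+: r → ∀ y, runFrom f x t = some y → y ∉ Bad) ∧
  (∀ t, t <+: r → ∀ u : List E, (∀ e ∈ u, e ∈ Suc) →
      ∀ y, runFrom f x (t ++ u) = some y → y ∉ Bad) ∧
  (∀ t, t <+: r → ∀ e ∈ Suc, ∀ y, runFrom f x (t ++ [e]) = some y →
      ¬ (t ++ [e]) <+: r → y ∈ R)

/-- The set `R` of AE-robust recoverable states: the largest subset of
`X \ Bad` each of whose elements admits a robust-recovery strategy (relative
to the set itself). -/
def recSet (f : X → E → Option X) (Suc : Set E) (XR Bad : Set X) : Set X :=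
  ⋃₀ {R | R ⊆ Badᶜ ∧ ∀ x ∈ R, ∃ r, IsRecoveryPath f Suc XR Bad R x r}

/-- The attacked system `Sa/Ga` is AE-robust recoverable w.r.t. the robust
region `XR` if every detection state is AE-robust recoverable. -/
noncomputable def AERobustRecoverable (f : X → E → Option X) (x0 : X)
    (Suc Scv : Set E) (XUS XS XR : Set X) : Prop :=
  detStates f x0 XS Scv ⊆ recSet f Suc XR (vulnStates f Scv ∪ XUS)

/-- Reachable states of `G^R` (the state set of the synchronous composition). -/
noncomputable def grStates (f : X → E → Option X) (x0 : X) (XS : Set X) (Scv : Set E) :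
    Set (Option X × X) :=
  {p | ∃ w, runFrom (grStep f XS Scv) (grInit x0) w = some p}

/-- A supervisor for `G^R`, represented by its state set `Q` (inducing a strict
subautomaton of `G^R`): it contains the initial state and is controllable
w.r.t. `Suc` (attacked events being controllable). -/
structure IsGRSupervisor (f : X → E → Option X) (x0 : X) (Suc Scv : Set E)
    (XS : Set X) (Q : Set (Option X × X)) : Prop where
  subset : Q ⊆ grStates f x0 XS Scv
  init_mem : grInit x0 ∈ Q
  controllable : ∀ p ∈ Q, ∀ e ∈ Suc, ∀ q, grStep f XS Scv p (Sum.inl e) = some q → q ∈ Q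

/-- State set of the resilient specification `Ha`: `G^R` minus every post-attack
state `(A, x)` with `x ∈ X_v ∪ X_US`. -/
def haCarrier (f : X → E → Option X) (Scv : Set E) (XUS : Set X) :
    Set (Option X × X) :=
  {p | ¬ (p.1 = none ∧ p.2 ∈ vulnStates f Scv ∪ XUS)}

/-- Marked states of `Ha`: post-attack states `(A, x)` with `x` in the robust
region. -/
def haMarked (XR : Set X) : Set (Option X × X) :=
  {p | p.1 = (none : Option X) ∧ p.2 ∈ XR}

/-- The closed-loop language `L(S^R/G^R) = L(S^R)` of a supervisor `Q` for `G^R`. -/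
noncomputable def SRLang (f : X → E → Option X) (x0 : X) (XS : Set X) (Scv : Set E)
    (Q : Set (Option X × X)) : Set (List (E ⊕ E)) :=
  Lang (subStep (grStep f XS Scv) Q) (grInit x0)

/-- `S^R` is safe w.r.t. the resilient specification `Ha`: `L(S^R) ⊆ L(Ha)`. -/
noncomputable def SafeWrtHa (f : X → E → Option X) (x0 : X) (XS : Set X)
    (Scv : Set E) (XUS : Set X) (Q : Set (Option X × X)) : Prop :=
  SRLang f x0 XS Scv Q ⊆
    Lang (subStep (grStep f XS Scv) (haCarrier f Scv XUS)) (grInit x0)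

/-- `S^R` is nonblocking: from every post-attack state of `S^R`, a marked state
of `Ha` is reachable within `S^R`. -/
noncomputable def NonblockingSR (f : X → E → Option X) (XS : Set X) (Scv : Set E)
    (XR : Set X) (Q : Set (Option X × X)) : Prop :=
  ∀ p ∈ Q, p.1 = (none : Option X) →
    ∃ w q, runFrom (subStep (grStep f XS Scv) Q) p w = some q ∧ q ∈ haMarked XR

/-- `S^R` is maximally permissive among safe nonblocking supervisors for `G^R`. -/
noncomputable def MaxPermissive (f : X → E → Option X) (x0 : X) (Suc Scv : Set E)
    (XS XUS XR : Set X) (Q : Set (Option X × X)) : Prop :=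
  ∀ Q', IsGRSupervisor f x0 Suc Scv XS Q' → SafeWrtHa f x0 XS Scv XUS Q' →
    NonblockingSR f XS Scv XR Q' → SRLang f x0 XS Scv Q' ⊆ SRLang f x0 XS Scv Q

/-- `S^R` (given by its state set `Q`) is resilient w.r.t. `Scv` and the robust
region `XR`: it permits the full nominal behavior `L(S/G)`, and after any
AE-attack `sσᵃ` feasible in `L(Sa/Ga)` it permits the attack, keeps all its
subsequent behavior out of `Bad = X_v ∪ X_US`, and can always be extended
within `L(S^R)` to reach a post-attack state `(A, x)` with `x ∈ XR`; i.e. it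
enforces a robust-recovery strategy from the detection state. -/
noncomputable def ResilientSup (f : X → E → Option X) (x0 : X) (Scv : Set E)
    (XS XR Bad : Set X) (Q : Set (Option X × X)) : Prop :=
  (∀ s ∈ Lang (subStep f XS) x0, embed s ∈ SRLang f x0 XS Scv Q) ∧
  ∀ s : List E, embed s ∈ SRLang f x0 XS Scv Q →
    ∀ σ ∈ Scv, embed s ++ [Sum.inr σ] ∈ GRLang f x0 XS Scv →
      embed s ++ [Sum.inr σ] ∈ SRLang f x0 XS Scv Q ∧
      ∀ t : List E, embed s ++ [Sum.inr σ] ++ embed t ∈ SRLang f x0 XS Scv Q →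
        (∀ t', t' <+: t → ∀ y, runFrom f x0 (s ++ σ :: t') = some y →
            y ∉ Bad) ∧
        ∃ u q, runFrom (subStep (grStep f XS Scv) Q) (grInit x0)
                 (embed s ++ [Sum.inr σ] ++ embed t ++ u) = some q ∧
               q.1 = (none : Option X) ∧ q.2 ∈ XR

/-- A prefix-closed language. -/
def PrefixClosed (K : Set (List E)) : Prop := ∀ s t : List E, s ++ t ∈ K → s ∈ K

/-- `K` is controllable w.r.t. the language `M` and uncontrollable events `Suc`. -/
def ControllableLang (K M : Set (List E)) (Suc : Set E) : Prop :=
  ∀ s ∈ K, ∀ e ∈ Suc, s ++ [e] ∈ M → s ++ [e] ∈ K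

/-- The supremal controllable (prefix-closed) sublanguage of `M` w.r.t. `LG`. -/
def supC (M LG : Set (List E)) (Suc : Set E) : Set (List E) :=
  ⋃₀ {K | K ⊆ M ∧ PrefixClosed K ∧ ControllableLang K LG Suc}

end RobustRec

/-!
Take for `S^R` the reachable part of `G^R` minus every post-attack state `(A, x)` with `x ∉ R`.
Pre-attack states are untouched, so `L(S/G)` survives, and detection states lie in `R`, so every
attack is admitted. Since `R` is the greatest set of states having recovery strategies relative
to itself, any state with such a strategy belongs to `R`; so `R` is closed under uncontrollable
moves (making `S^R` controllable) and contains every state along a recovery strategy (so from each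
post-attack state of `S^R` one reaches `G_robust` inside `S^R`). States of `R` avoid
`X_v ∪ X_US`.
-/

namespace RobustRec

variable {X E : Type*}

section Runs

variable {f : X → E → Option X}

theorem runFrom_append (x : X) (a b : List E) :
    runFrom f x (a ++ b) = (runFrom f x a).bind fun y => runFrom f y b := by
  induction a generalizing x with
  | nil => rfl
  | cons e a ih => cases h : f x e <;> simp [runFrom, h, ih]

theorem isSome_runFrom_of_prefix {x : X} {t w : List E} (htw : t <+: w)
    (hw : (runFrom f x w).isSome) : (runFrom f x t).isSome := by
  obtain ⟨u, rfl⟩ := htw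
  rw [runFrom_append] at hw
  cases h : runFrom f x t <;> simp_all

theorem subStep_eq_some_iff {Q : Set X} {x y : X} {e : E} :
    subStep f Q x e = some y ↔ f x e = some y ∧ x ∈ Q ∧ y ∈ Q := by
  unfold subStep
  cases f x e <;> by_cases x ∈ Q <;> by_cases y ∈ Q <;> aesop

theorem runFrom_of_runFrom_subStep {Q : Set X} {x y : X} {w : List E}
    (h : runFrom (subStep f Q) x w = some y) : runFrom f x w = some y := by
  induction w generalizing x with
  | nil => exact h
  | cons e w ih =>
    cases hs : subStep f Q x e with
    | none => simp [runFrom, hs] at h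
    | some z =>
      simp only [runFrom, hs, Option.bind_some] at h
      simp [runFrom, (subStep_eq_some_iff.mp hs).1, ih h]

theorem mem_of_runFrom_subStep {Q : Set X} {x y : X} {w : List E} (hx : x ∈ Q)
    (h : runFrom (subStep f Q) x w = some y) : y ∈ Q := by
  induction w generalizing x with
  | nil =>
    simp only [runFrom, Option.some.injEq] at h
    exact h ▸ hx
  | cons e w ih =>
    cases hs : subStep f Q x e with
    | none => simp [runFrom, hs] at h
    | some z =>
      simp only [runFrom, hs, Option.bind_some] at h
      exact ih (subStep_eq_some_iff.mp hs).2.2 h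

theorem runFrom_subStep_eq {Q : Set X} {x : X} {w : List E}
    (hQ : ∀ t, t <+: w → ∀ z, runFrom f x t = some z → z ∈ Q) :
    runFrom (subStep f Q) x w = runFrom f x w := by
  induction w generalizing x with
  | nil => rfl
  | cons e w ih =>
    have hx : x ∈ Q := hQ [] List.nil_prefix x rfl
    cases he : f x e with
    | none => simp [runFrom, subStep, he]
    | some y =>
      have hy : y ∈ Q := hQ [e] (by simp) y (by simp [runFrom, he])
      have htail : ∀ t, t <+: w → ∀ z, runFrom f y t = some z → z ∈ Q := fun t ht z hz =>
        hQ (e :: t) (List.cons_prefix_cons.mpr ⟨rfl, ht⟩) z (by simpa [runFrom, he] using hz)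
      simp [runFrom, subStep_eq_some_iff.mpr ⟨he, hx, hy⟩, he, ih htail]

end Runs

section Recovery

variable {f : X → E → Option X} {Suc : Set E} {XR Bad R : Set X} {x y : X}

theorem IsRecoveryPath.notMem_bad {r : List E} (h : IsRecoveryPath f Suc XR Bad R x r) :
    x ∉ Bad :=
  h.2.1 [] List.nil_prefix x rfl

theorem IsRecoveryPath.mono {R' : Set X} (hR : R ⊆ R') {r : List E}
    (h : IsRecoveryPath f Suc XR Bad R x r) : IsRecoveryPath f Suc XR Bad R' x r :=
  ⟨h.1, h.2.1, h.2.2.1, fun t ht e he z hz hnp => hR (h.2.2.2 t ht e he z hz hnp)⟩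

theorem IsRecoveryPath.drop {a b : List E} (h : IsRecoveryPath f Suc XR Bad R x (a ++ b))
    (ha : runFrom f x a = some y) : IsRecoveryPath f Suc XR Bad R y b := by
  have hrun : ∀ w, runFrom f x (a ++ w) = runFrom f y w := fun w => by
    simp [runFrom_append, ha]
  have hpre : ∀ t, t <+: b → a ++ t <+: a ++ b := fun t ht =>
    (List.prefix_append_right_inj a).mpr ht
  obtain ⟨⟨z, hz, hzr⟩, hvisit, hunc, hdev⟩ := h
  refine ⟨⟨z, hz, by rwa [← hrun]⟩, fun t ht z hz => ?_, fun t ht u hu z hz => ?_,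
    fun t ht e he z hz hnp => ?_⟩
  · exact hvisit (a ++ t) (hpre t ht) z (by rwa [hrun])
  · exact hunc (a ++ t) (hpre t ht) u hu z (by rwa [List.append_assoc, hrun])
  · refine hdev (a ++ t) (hpre t ht) e he z (by rwa [List.append_assoc, hrun]) ?_
    rwa [List.append_assoc, List.prefix_append_right_inj]

theorem recSet_subset_compl : recSet f Suc XR Bad ⊆ Badᶜ := by
  rintro x ⟨R, ⟨hRBad, -⟩, hx⟩
  exact hRBad hx

theorem exists_isRecoveryPath_of_mem_recSet (hx : x ∈ recSet f Suc XR Bad) :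
    ∃ r, IsRecoveryPath f Suc XR Bad (recSet f Suc XR Bad) x r := by
  obtain ⟨R, ⟨hRBad, hR⟩, hxR⟩ := hx
  obtain ⟨r, hr⟩ := hR x hxR
  exact ⟨r, hr.mono (R' := recSet f Suc XR Bad) fun z hz => ⟨R, ⟨hRBad, hR⟩, hz⟩⟩

theorem mem_recSet_of_isRecoveryPath {r : List E}
    (h : IsRecoveryPath f Suc XR Bad (recSet f Suc XR Bad) x r) : x ∈ recSet f Suc XR Bad := by
  refine ⟨insert x (recSet f Suc XR Bad), ⟨?_, ?_⟩, Set.mem_insert x _⟩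
  · exact Set.insert_subset h.notMem_bad recSet_subset_compl
  · rintro z (rfl | hz)
    · exact ⟨r, h.mono (Set.subset_insert _ _)⟩
    · obtain ⟨r', hr'⟩ := exists_isRecoveryPath_of_mem_recSet hz
      exact ⟨r', hr'.mono (Set.subset_insert _ _)⟩

theorem IsRecoveryPath.mem_recSet_of_prefix {r t : List E}
    (h : IsRecoveryPath f Suc XR Bad (recSet f Suc XR Bad) x r) (ht : t <+: r)
    (hy : runFrom f x t = some y) : y ∈ recSet f Suc XR Bad := by
  obtain ⟨u, rfl⟩ := ht
  exact mem_recSet_of_isRecoveryPath (h.drop hy)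

theorem mem_recSet_of_uncontrollable {e : E} (hx : x ∈ recSet f Suc XR Bad) (he : e ∈ Suc)
    (hf : f x e = some y) : y ∈ recSet f Suc XR Bad := by
  obtain ⟨r, hr⟩ := exists_isRecoveryPath_of_mem_recSet hx
  have hrun : runFrom f x [e] = some y := by simp [runFrom, hf]
  by_cases hp : [e] <+: r
  · exact hr.mem_recSet_of_prefix hp hrun
  · exact hr.2.2.2 [] List.nil_prefix e he y hrun (by simpa using hp)

end Recovery

section AttackedSystem

variable {f : X → E → Option X} {XS : Set X} {Scv : Set E}

theorem grStep_some_inl (x : X) (e : E) :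
    grStep f XS Scv (some x, x) (Sum.inl e) = (subStep f XS x e).map fun y => (some y, y) := by
  cases hs : subStep f XS x e with
  | none => simp [grStep, prodStep, saStep, hs]
  | some y => simp [grStep, prodStep, saStep, gaStep, hs, (subStep_eq_some_iff.mp hs).1]

theorem grStep_none_inl (x : X) (e : E) :
    grStep f XS Scv (none, x) (Sum.inl e) = (f x e).map (Prod.mk none) := by
  cases h : f x e <;> simp [grStep, prodStep, saStep, gaStep, h]

theorem grStep_inr_eq_some {p q : Option X × X} {σ : E}
    (h : grStep f XS Scv p (Sum.inr σ) = some q) : q.1 = none ∧ f p.2 σ = some q.2 := by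
  obtain ⟨_ | x, x'⟩ := p <;> by_cases hσ : σ ∈ Scv <;>
    simp [grStep, prodStep, saStep, gaStep, hσ] at h <;> aesop

theorem runFrom_grStep_some_embed (x : X) (s : List E) :
    runFrom (grStep f XS Scv) (some x, x) (embed s) =
      (runFrom (subStep f XS) x s).map fun y => (some y, y) := by
  induction s generalizing x with
  | nil => rfl
  | cons e s ih =>
    cases hs : subStep f XS x e <;> simp_all [embed, runFrom, grStep_some_inl]

theorem runFrom_grStep_none_embed (x : X) (t : List E) :
    runFrom (grStep f XS Scv) (none, x) (embed t) = (runFrom f x t).map (Prod.mk none) := by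
  induction t generalizing x with
  | nil => rfl
  | cons e t ih =>
    cases he : f x e <;> simp_all [embed, runFrom, grStep_none_inl]

theorem runFrom_mem_grStates {x0 : X} {p q : Option X × X} {w : List (E ⊕ E)}
    (hp : p ∈ grStates f x0 XS Scv) (hq : runFrom (grStep f XS Scv) p w = some q) :
    q ∈ grStates f x0 XS Scv := by
  obtain ⟨v, hv⟩ := hp
  exact ⟨v ++ w, by simp [runFrom_append, hv, hq]⟩

theorem exists_detStates_of_attack {x0 : X} {s : List E} {σ : E} (hσ : σ ∈ Scv)
    (hatk : embed s ++ [Sum.inr σ] ∈ GRLang f x0 XS Scv) :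
    ∃ y, runFrom (grStep f XS Scv) (grInit x0) (embed s ++ [Sum.inr σ]) = some (none, y) ∧
      runFrom f x0 (s ++ [σ]) = some y ∧ y ∈ detStates f x0 XS Scv := by
  obtain ⟨q, hq⟩ := Option.isSome_iff_exists.mp hatk
  have hs := hq
  rw [runFrom_append, grInit, runFrom_grStep_some_embed] at hs
  obtain ⟨x, hx, hsq⟩ : ∃ x, runFrom (subStep f XS) x0 s = some x ∧
      runFrom (grStep f XS Scv) (some x, x) [Sum.inr σ] = some q := by
    cases hx : runFrom (subStep f XS) x0 s <;> simp_all
  obtain ⟨q', hstep, rfl⟩ : ∃ q', grStep f XS Scv (some x, x) (Sum.inr σ) = some q' ∧ q' = q := by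
    cases h : grStep f XS Scv (some x, x) (Sum.inr σ) <;> simp_all [runFrom]
  obtain ⟨hfst, hy⟩ := grStep_inr_eq_some hstep
  have hfrun : runFrom f x0 (s ++ [σ]) = some q'.2 := by
    simp [runFrom_append, runFrom_of_runFrom_subStep hx, runFrom, hy]
  refine ⟨q'.2, by rw [hq, ← hfst], hfrun, s ++ [σ],
    ⟨s, σ, rfl, hσ, by simp [Lang, hfrun], by simp [Lang, hx], hatk⟩, hfrun⟩

end AttackedSystem

def resilientStates (f : X → E → Option X) (x0 : X) (Suc Scv : Set E) (XS XR Bad : Set X) :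
    Set (Option X × X) :=
  {p ∈ grStates f x0 XS Scv | p.1 = none → p.2 ∈ recSet f Suc XR Bad}

section Resilience

variable {f : X → E → Option X} {x0 : X} {Suc Scv : Set E} {XS XR Bad : Set X}

theorem isGRSupervisor_resilientStates :
    IsGRSupervisor f x0 Suc Scv XS (resilientStates f x0 Suc Scv XS XR Bad) where
  subset _ hp := hp.1
  init_mem := ⟨⟨[], rfl⟩, fun h => by simp [grInit] at h⟩
  controllable := by
    rintro ⟨_ | x, x'⟩ ⟨hreach, hrec⟩ e he ⟨q1, q2⟩ hq
    all_goals refine ⟨runFrom_mem_grStates (w := [Sum.inl e]) hreach (by simp [runFrom, hq]), ?_⟩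
    · rw [grStep_none_inl] at hq
      obtain ⟨y, hy, ⟨⟩⟩ := Option.map_eq_some_iff.mp hq
      exact fun _ => mem_recSet_of_uncontrollable (hrec rfl) he hy
    · rintro (rfl : q1 = none)
      cases hs : subStep f XS x e <;> cases hf : f x' e <;>
        simp [grStep, prodStep, saStep, gaStep, hs, hf] at hq

theorem runFrom_grStep_embed_mem_resilientStates {s : List E} {p : Option X × X}
    (h : runFrom (grStep f XS Scv) (grInit x0) (embed s) = some p) :
    p ∈ resilientStates f x0 Suc Scv XS XR Bad := by
  refine ⟨⟨embed s, h⟩, fun hp => absurd hp ?_⟩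
  rw [grInit, runFrom_grStep_some_embed] at h
  obtain ⟨x, -, rfl⟩ := Option.map_eq_some_iff.mp h
  simp

theorem embed_mem_SRLang_resilientStates {s : List E} (hs : s ∈ Lang (subStep f XS) x0) :
    embed s ∈ SRLang f x0 XS Scv (resilientStates f x0 Suc Scv XS XR Bad) := by
  simp only [SRLang, Lang, Set.mem_ofPred_eq]
  rw [runFrom_subStep_eq]
  · simpa [grInit, runFrom_grStep_some_embed, Lang] using hs
  · intro t ht z hz
    obtain ⟨s', -, rfl⟩ := List.prefix_map_iff.mp ht
    exact runFrom_grStep_embed_mem_resilientStates hz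

theorem runFrom_resilientStates_attack {s : List E} {σ : E} {y : X}
    (hatk : runFrom (grStep f XS Scv) (grInit x0) (embed s ++ [Sum.inr σ]) = some (none, y))
    (hy : y ∈ recSet f Suc XR Bad) :
    runFrom (subStep (grStep f XS Scv) (resilientStates f x0 Suc Scv XS XR Bad)) (grInit x0)
      (embed s ++ [Sum.inr σ]) = some (none, y) := by
  rw [runFrom_subStep_eq, hatk]
  intro u hu p hp
  rcases List.prefix_concat_iff.mp hu with rfl | hu
  · rw [hatk, Option.some.injEq] at hp
    exact hp ▸ ⟨⟨_, hatk⟩, fun _ => hy⟩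
  · obtain ⟨s', -, rfl⟩ := List.prefix_map_iff.mp hu
    exact runFrom_grStep_embed_mem_resilientStates hp

theorem exists_mem_recSet_of_runFrom_resilientStates {a : List (E ⊕ E)} {t : List E} {y : X}
    {q : Option X × X}
    (ha : runFrom (grStep f XS Scv) (grInit x0) a = some (none, y))
    (h : runFrom (subStep (grStep f XS Scv) (resilientStates f x0 Suc Scv XS XR Bad))
      (grInit x0) (a ++ embed t) = some q) :
    ∃ z, runFrom f y t = some z ∧ q = (none, z) ∧ z ∈ recSet f Suc XR Bad := by
  have hgr := runFrom_of_runFrom_subStep h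
  rw [runFrom_append, ha, Option.bind_some, runFrom_grStep_none_embed] at hgr
  obtain ⟨z, hz, rfl⟩ := Option.map_eq_some_iff.mp hgr
  exact ⟨z, hz, rfl, (mem_of_runFrom_subStep isGRSupervisor_resilientStates.init_mem h).2 rfl⟩

theorem nonblockingSR_resilientStates :
    NonblockingSR f XS Scv XR (resilientStates f x0 Suc Scv XS XR Bad) := by
  rintro ⟨p1, z⟩ ⟨hreach, hz⟩ (rfl : p1 = none)
  obtain ⟨r, hr⟩ := exists_isRecoveryPath_of_mem_recSet (hz rfl)
  obtain ⟨w, hw, hrun⟩ := hr.1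
  refine ⟨embed r, (none, w), ?_, rfl, hw⟩
  rw [runFrom_subStep_eq, runFrom_grStep_none_embed, hrun, Option.map_some]
  intro u hu p hp
  obtain ⟨r', hr', rfl⟩ := List.prefix_map_iff.mp hu
  change runFrom (grStep f XS Scv) (none, z) (embed r') = some p at hp
  rw [runFrom_grStep_none_embed] at hp
  obtain ⟨z', hz', rfl⟩ := Option.map_eq_some_iff.mp hp
  refine ⟨runFrom_mem_grStates hreach (w := embed r') ?_, fun _ => hr.mem_recSet_of_prefix hr' hz'⟩
  rw [runFrom_grStep_none_embed, hz', Option.map_some]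

theorem resilientSup_resilientStates (hrec : detStates f x0 XS Scv ⊆ recSet f Suc XR Bad) :
    ResilientSup f x0 Scv XS XR Bad (resilientStates f x0 Suc Scv XS XR Bad) := by
  refine ⟨fun s hs => embed_mem_SRLang_resilientStates hs, fun s _ σ hσ hatk => ?_⟩
  obtain ⟨y, hgr, hfrun, hdet⟩ := exists_detStates_of_attack hσ hatk
  have hsr := runFrom_resilientStates_attack hgr (hrec hdet)
  refine ⟨by simp [SRLang, Lang, hsr], fun t ht => ⟨fun t' ht' y' hy' => ?_, ?_⟩⟩
  · obtain ⟨q, hq⟩ := Option.isSome_iff_exists.mp <| isSome_runFrom_of_prefix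
      ((List.prefix_append_right_inj _).mpr (ht'.map Sum.inl)) ht
    obtain ⟨z, hz, -, hzR⟩ := exists_mem_recSet_of_runFrom_resilientStates hgr hq
    have hrun : runFrom f x0 (s ++ σ :: t') = runFrom f y t' := by
      rw [← List.singleton_append, ← List.append_assoc, runFrom_append, hfrun, Option.bind_some]
    rw [hrun, hz, Option.some.injEq] at hy'
    exact hy' ▸ recSet_subset_compl hzR
  · obtain ⟨q, hq⟩ := Option.isSome_iff_exists.mp ht
    obtain ⟨z, -, rfl, -⟩ := exists_mem_recSet_of_runFrom_resilientStates hgr hq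
    obtain ⟨u, q', hu, hq'⟩ := nonblockingSR_resilientStates _
      (mem_of_runFrom_subStep isGRSupervisor_resilientStates.init_mem hq) rfl
    exact ⟨u, q', by rw [runFrom_append, hq, Option.bind_some, hu], hq'.1, hq'.2⟩

end Resilience

end RobustRec

theorem RobustRec.exists_resilient_of_AERobustRecoverable_general
    {X E : Type*}
    (f : X → E → Option X) (x0 : X) (Suc Scv : Set E) (XUS XS XR : Set X)
    (hrec : AERobustRecoverable f x0 Suc Scv XUS XS XR) :
    ∃ Q : Set (Option X × X), IsGRSupervisor f x0 Suc Scv XS Q ∧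
      ResilientSup f x0 Scv XS XR (vulnStates f Scv ∪ XUS) Q :=
  ⟨_, isGRSupervisor_resilientStates, resilientSup_resilientStates hrec⟩

/-- the "if" direction of Theorem 2. If the attacked system
`Sa/Ga` is AE-robust recoverable w.r.t. `G_robust`, then there exists a
resilient supervisor `S^R` for the attacked closed-loop system `G^R` w.r.t.
`Σ_{c,v}` and `G_robust`, i.e. a supervisor that permits the full nominal
behavior `L(S/G)` in the absence of attacks and enforces a robust-recovery
strategy to `G_robust` after every AE-attack. -/
theorem RobustRec.exists_resilient_of_AERobustRecoverable
    {X E : Type*} [Fintype X] [Fintype E]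
    (f : X → E → Option X) (x0 : X) (Sc Suc Scv : Set E) (XUS XS XR : Set X)
    (hdisj : Sc ∩ Suc = ∅) (hcover : Sc ∪ Suc = Set.univ) (hScv : Scv ⊆ Sc)
    (hS : IsSupervisor f x0 Suc XUS XS)
    (hXR : XR ∩ (vulnStates f Scv ∪ XUS) = ∅)
    (hrec : AERobustRecoverable f x0 Suc Scv XUS XS XR) :
    ∃ Q : Set (Option X × X), IsGRSupervisor f x0 Suc Scv XS Q ∧
      ResilientSup f x0 Scv XS XR (vulnStates f Scv ∪ XUS) Q :=
  RobustRec.exists_resilient_of_AERobustRecoverable_general f x0 Suc Scv XUS XS XR hrec
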